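/- (Pliss-type lemma.) Let (a_i)_{i ≥ 0} be a bounded sequence of real numbers, say a_i ≥ −K for all i, and let λ₁ > λ₂ be reals. If liminf_{n→∞} (1/n) Σ_{i=0}^{n−1} a_i ≥ λ₁, then there exists m ≥ 0 such that for every n ≥ 1, (1/n) Σ_{i=0}^{n−1} a_{m+i} ≥ λ₂. -/
import Mathlib


open Filter Finset

/-- Pliss-type lemma: if a sequence bounded below has asymptotic
lower average at least `λ₁ > λ₂`, then some tail start `m` has all finite
averages at least `λ₂`. -/
theorem stmt9 (a : ℕ → ℝ) (K : ℝ) (hK : ∀ i, -K ≤ a i)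
    (lam₁ lam₂ : ℝ) (hlam : lam₂ < lam₁)
    (h : lam₁ ≤ liminf (fun n : ℕ => (∑ i ∈ range n, a i) / n) atTop) :
    ∃ m : ℕ, ∀ n : ℕ, 1 ≤ n → lam₂ ≤ (∑ i ∈ range n, a (m + i)) / n := by
  set f : ℕ → ℝ := fun n => (∑ i ∈ range n, a i) / n with hf
  set S : ℕ → ℝ := fun n => ∑ i ∈ range n, (a i - lam₂) with hS
  set ε : ℝ := (lam₁ - lam₂) / 2 with hε
  have hε0 : 0 < ε := by rw [hε]; linarith
  -- boundedness below of f
  have hbdd : IsBoundedUnder (· ≥ ·) atTop f := by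
    refine isBoundedUnder_of ⟨min (-K) 0, fun n => ?_⟩
    rcases Nat.eq_zero_or_pos n with h0 | h0
    · simp [hf, h0]
    · have hn : (0:ℝ) < n := by exact_mod_cast h0
      have hsum : (-K) * n ≤ ∑ i ∈ range n, a i := by
        calc (-K) * n = ∑ _i ∈ range n, (-K) := by
              simp [mul_comm]
          _ ≤ ∑ i ∈ range n, a i := Finset.sum_le_sum fun i _ => hK i
      have : -K ≤ f n := by
        rw [hf, le_div_iff₀ hn]
        simpa [mul_comm] using hsum
      exact le_trans (min_le_left _ _) this
  have hev : ∀ᶠ n in atTop, lam₂ + ε < f n := by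
    apply eventually_lt_of_lt_liminf _ hbdd
    calc lam₂ + ε < lam₁ := by rw [hε]; linarith
      _ ≤ _ := h
  -- S tends to infinity
  have hSsum : ∀ n : ℕ, S n = (∑ i ∈ range n, a i) - n * lam₂ := by
    intro n
    simp [hS, Finset.sum_sub_distrib, mul_comm]
  have hSge : ∀ᶠ n : ℕ in atTop, ε * n ≤ S n := by
    filter_upwards [hev, eventually_ge_atTop 1] with n hn hn1
    have hnpos : (0:ℝ) < n := by exact_mod_cast hn1
    rw [hf, lt_div_iff₀ hnpos] at hn
    rw [hSsum n]
    nlinarith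
  have hStop : Tendsto S atTop atTop := by
    refine tendsto_atTop_mono' atTop hSge ?_
    exact (tendsto_natCast_atTop_atTop (R := ℝ)).const_mul_atTop hε0
  obtain ⟨N, hN⟩ := (tendsto_atTop.mp hStop (S 0)).exists_forall_of_atTop
  -- minimizer of S on range (N+1)
  obtain ⟨m, hmmem, hmin⟩ := Finset.exists_min_image (Finset.range (N + 1)) S
    ⟨0, Finset.mem_range.mpr (Nat.succ_pos N)⟩
  have hminall : ∀ k, S m ≤ S k := by
    intro k
    rcases le_or_gt k N with hk | hk
    · exact hmin k (Finset.mem_range.mpr (Nat.lt_succ_of_le hk))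
    · calc S m ≤ S 0 := hmin 0 (Finset.mem_range.mpr (Nat.succ_pos N))
        _ ≤ S k := hN k hk.le
  refine ⟨m, fun n hn => ?_⟩
  have hnpos : (0:ℝ) < n := by exact_mod_cast hn
  rw [le_div_iff₀ hnpos]
  have hsplit : S (m + n) = S m + ∑ i ∈ range n, (a (m + i) - lam₂) := by
    rw [hS]
    exact Finset.sum_range_add _ m n
  have h1 : 0 ≤ ∑ i ∈ range n, (a (m + i) - lam₂) := by
    have := hminall (m + n)
    linarith [hsplit ▸ this]
  have h2 : ∑ i ∈ range n, (a (m + i) - lam₂)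
      = (∑ i ∈ range n, a (m + i)) - n * lam₂ := by
    simp [Finset.sum_sub_distrib, mul_comm]
  linarith
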